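/- Let Nt, Nr ∈ ℕ, 0 ≤ r < min(Nt,Nr), and define Δ(r) = (Nt−r)(Nr−r)/(2(Nt+Nr−2r)). Then for any nonnegative integers T ≥ 1 and m, with L = T + m and s = L·r + m·Δ(r), one has L·(Nt − s/L)·(Nr − s/L) ≥ T·(Nt−r)(Nr−r) + (m/2)·(Nt−r)(Nr−r). -/

import Mathlib

/-!
Write `a = Nt − r`, `b = Nr − r` and `c = m·Δ/L`, so that `s/L = r + c`. Expanding,
`L(a − c)(b − c) = L·ab − m·Δ·(a + b) + L·c²`, and `Δ` is chosen exactly so that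
`m·Δ·(a + b) = (m/2)·ab`. Since `L = T + m`, the right side is `T·ab + (m/2)·ab + L·c²`,
and the square term is nonnegative.
-/

/-- The rate offset `Δ(r)` of the paper, in terms of `a = Nt − r` and `b = Nr − r`. -/
noncomputable def rateOffset (a b : ℝ) : ℝ := a * b / (2 * (a + b))

lemma two_mul_rateOffset_mul_add {a b : ℝ} (hab : a + b ≠ 0) :
    2 * rateOffset a b * (a + b) = a * b := by
  unfold rateOffset
  field_simp

lemma mul_sub_rateOffset_mul_sub_rateOffset {a b L m : ℝ} (hab : a + b ≠ 0) (hL : L ≠ 0) :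
    L * ((a - m * rateOffset a b / L) * (b - m * rateOffset a b / L)) =
      (L - m / 2) * (a * b) + L * (m * rateOffset a b / L) ^ 2 := by
  have hΔ := two_mul_rateOffset_mul_add hab
  field_simp
  linear_combination (-(L * m)) * hΔ

lemma le_mul_sub_rateOffset_mul_sub_rateOffset {a b L T m : ℝ} (hab : a + b ≠ 0) (hL : 0 < L)
    (hLTm : L = T + m) :
    T * (a * b) + m / 2 * (a * b) ≤
      L * ((a - m * rateOffset a b / L) * (b - m * rateOffset a b / L)) := by
  rw [mul_sub_rateOffset_mul_sub_rateOffset hab hL.ne']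
  have hsq : 0 ≤ L * (m * rateOffset a b / L) ^ 2 := by positivity
  have hcoeff : (L - m / 2) * (a * b) = T * (a * b) + m / 2 * (a * b) := by
    rw [hLTm]
    ring
  linarith

theorem stmt2_general (Nt Nr : ℕ) (r : ℝ) (hr : r < min (Nt : ℝ) (Nr : ℝ))
    (T m : ℕ) (hT : 1 ≤ T) (L : ℕ) (hL : L = T + m) (s : ℝ)
    (hs : s = (L : ℝ) * r + (m : ℝ) *
      (((Nt : ℝ) - r) * ((Nr : ℝ) - r) / (2 * ((Nt : ℝ) + (Nr : ℝ) - 2 * r)))) :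
    (T : ℝ) * (((Nt : ℝ) - r) * ((Nr : ℝ) - r)) +
      ((m : ℝ) / 2) * (((Nt : ℝ) - r) * ((Nr : ℝ) - r)) ≤
    (L : ℝ) * (((Nt : ℝ) - s / L) * ((Nr : ℝ) - s / L)) := by
  have hNt : r < Nt := hr.trans_le (min_le_left _ _)
  have hNr : r < Nr := hr.trans_le (min_le_right _ _)
  have hab : ((Nt : ℝ) - r) + ((Nr : ℝ) - r) ≠ 0 := by linarith
  have hLpos : (0 : ℝ) < L := by exact_mod_cast (show 0 < L by omega)
  have hΔ : rateOffset (Nt - r) (Nr - r) =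
      ((Nt : ℝ) - r) * ((Nr : ℝ) - r) / (2 * ((Nt : ℝ) + (Nr : ℝ) - 2 * r)) := by
    rw [rateOffset]
    ring_nf
  have hsL : s / L = r + m * rateOffset (Nt - r) (Nr - r) / L := by
    rw [hs, ← hΔ]
    field_simp
  rw [hsL, sub_add_eq_sub_sub, sub_add_eq_sub_sub]
  exact le_mul_sub_rateOffset_mul_sub_rateOffset hab hLpos (by exact_mod_cast hL)

/-- With the rate offset `Δ(r) = (Nt−r)(Nr−r)/(2(Nt+Nr−2r))`, a parallel channel with
`L = T + m` blocks and total multiplexing gain `s = L·r + m·Δ(r)` has diversity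
exponent `L·(Nt − s/L)(Nr − s/L)` at least `T·(Nt−r)(Nr−r) + (m/2)·(Nt−r)(Nr−r)`. -/
theorem stmt2 (Nt Nr : ℕ) (r : ℝ) (hr0 : 0 ≤ r) (hr : r < min (Nt : ℝ) (Nr : ℝ))
    (T m : ℕ) (hT : 1 ≤ T) (L : ℕ) (hL : L = T + m) (s : ℝ)
    (hs : s = (L : ℝ) * r + (m : ℝ) *
      (((Nt : ℝ) - r) * ((Nr : ℝ) - r) / (2 * ((Nt : ℝ) + (Nr : ℝ) - 2 * r)))) :
    (T : ℝ) * (((Nt : ℝ) - r) * ((Nr : ℝ) - r)) +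
      ((m : ℝ) / 2) * (((Nt : ℝ) - r) * ((Nr : ℝ) - r)) ≤
    (L : ℝ) * (((Nt : ℝ) - s / L) * ((Nr : ℝ) - s / L)) :=
  stmt2_general Nt Nr r hr T m hT L hL s hs
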